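/- Geometric decay of residuals under repeated 3/2-approximate routing: let R be an α-congestion-approximator for (B, C), let b_1 lie in the column space of B, and suppose flows f_1, …, f_T ∈ ℝ^E and demands b_2, …, b_{T+1} ∈ ℝ^V satisfy b_{i+1} = b_i − B f_i and ‖C⁻¹ f_i‖_∞ + 2α·‖R b_{i+1}‖_∞ ≤ (3/2)·opt(b_i) for each 1 ≤ i ≤ T. Then ‖R b_{i+1}‖_∞ ≤ (1/2)·‖R b_i‖_∞ for each i, and therefore ‖R b_{T+1}‖_∞ ≤ 2^{−T}·‖R b_1‖_∞. -/

import Mathlib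

open Matrix

/-- `linf x` is the maximum absolute entry of the vector `x`, i.e. `‖x‖_∞`. -/
noncomputable def linf {ι : Type*} [Fintype ι] (x : ι → ℝ) : ℝ := ⨆ i, |x i|

/-- `l1 x` is the sum of absolute entries of the vector `x`, i.e. `‖x‖₁`. -/
def l1 {ι : Type*} [Fintype ι] (x : ι → ℝ) : ℝ := ∑ i, |x i|

/-- `opt B c b` is the minimum congestion `‖C⁻¹ f‖_∞` over flows `f` with `B f = b`,
where `C` is the diagonal matrix of capacities `c`. -/
noncomputable def opt {V E : Type*} [Fintype V] [Fintype E]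
    (B : Matrix V E ℝ) (c : E → ℝ) (b : V → ℝ) : ℝ :=
  sInf {t : ℝ | ∃ f : E → ℝ, B.mulVec f = b ∧ t = linf fun e => f e / c e}

/-- `R` is an `α`-congestion-approximator for `(B, C)`:
`‖R b‖_∞ ≤ opt(b) ≤ α · ‖R b‖_∞` for every `b` in the column space of `B`. -/
def IsCongestionApprox {V E W : Type*} [Fintype V] [Fintype E] [Fintype W]
    (B : Matrix V E ℝ) (c : E → ℝ) (α : ℝ) (R : Matrix W V ℝ) : Prop :=
  ∀ b : V → ℝ, (∃ f : E → ℝ, B.mulVec f = b) →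
    linf (R.mulVec b) ≤ opt B c b ∧ opt B c b ≤ α * linf (R.mulVec b)

/-! Routing `f_i` lowers the optimum congestion by at most the congestion of `f_i`, so
`opt(b_i) ≤ ‖C⁻¹ f_i‖_∞ + opt(b_{i+1}) ≤ ‖C⁻¹ f_i‖_∞ + α ‖R b_{i+1}‖_∞`. Against the `3/2`-guarantee
this leaves `α ‖R b_{i+1}‖_∞ ≤ opt(b_i) / 2 ≤ α ‖R b_i‖_∞ / 2`, and the halving iterates. -/

section linf

variable {ι : Type*} [Fintype ι]

lemma linf_nonneg (x : ι → ℝ) : 0 ≤ linf x :=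
  Real.iSup_nonneg fun _ => abs_nonneg _

lemma abs_le_linf (x : ι → ℝ) (i : ι) : |x i| ≤ linf x :=
  le_ciSup (f := fun j => |x j|) (Finite.bddAbove_range _) i

lemma linf_add_le (x y : ι → ℝ) : linf (x + y) ≤ linf x + linf y :=
  Real.iSup_le (fun i => (abs_add_le _ _).trans (add_le_add (abs_le_linf x i) (abs_le_linf y i)))
    (add_nonneg (linf_nonneg x) (linf_nonneg y))

end linf

lemma exists_mulVec_eq_sub {V E : Type*} [Fintype E] (B : Matrix V E ℝ) {b : V → ℝ}
    (hb : ∃ g, B *ᵥ g = b) (f : E → ℝ) : ∃ g, B *ᵥ g = b - B *ᵥ f :=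
  let ⟨g, hg⟩ := hb
  ⟨g - f, by rw [mulVec_sub, hg]⟩

section opt

variable {V E : Type*} [Fintype V] [Fintype E] (B : Matrix V E ℝ) (c : E → ℝ)

lemma opt_le {b : V → ℝ} {f : E → ℝ} (hf : B *ᵥ f = b) : opt B c b ≤ linf fun e => f e / c e :=
  csInf_le ⟨0, by rintro _ ⟨g, -, rfl⟩; exact linf_nonneg _⟩ ⟨f, hf, rfl⟩

lemma opt_le_linf_add_opt_sub (b : V → ℝ) (f : E → ℝ) (hb : ∃ g, B *ᵥ g = b - B *ᵥ f) :
    opt B c b ≤ (linf fun e => f e / c e) + opt B c (b - B *ᵥ f) := by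
  obtain ⟨g, hg⟩ := hb
  rw [← sub_le_iff_le_add']
  refine le_csInf ⟨_, g, hg, rfl⟩ ?_
  rintro _ ⟨g', hg', rfl⟩
  rw [sub_le_iff_le_add']
  calc opt B c b ≤ linf fun e => (f + g') e / c e := opt_le B c (by rw [mulVec_add, hg']; abel)
    _ ≤ _ := (congrArg linf (funext fun e => add_div _ _ _)).trans_le (linf_add_le _ _)

end opt

theorem IsCongestionApprox.linf_mulVec_sub_le_half {V E W : Type*} [Fintype V] [Fintype E]
    [Fintype W] {B : Matrix V E ℝ} {c : E → ℝ} {α : ℝ} {R : Matrix W V ℝ}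
    (hR : IsCongestionApprox B c α R) (hα : 0 < α) {b : V → ℝ} (hb : ∃ g, B *ᵥ g = b)
    (f : E → ℝ)
    (happrox : linf (fun e => f e / c e) + 2 * α * linf (R *ᵥ (b - B *ᵥ f)) ≤
      (3 / 2) * opt B c b) :
    linf (R *ᵥ (b - B *ᵥ f)) ≤ (1 / 2) * linf (R *ᵥ b) := by
  have hb' := exists_mulVec_eq_sub B hb f
  have hrouted := opt_le_linf_add_opt_sub B c b f hb'
  have hopt := (hR b hb).2
  have hopt' := (hR _ hb').2
  have hkey : α * linf (R *ᵥ (b - B *ᵥ f)) ≤ opt B c b / 2 := by linarith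
  refine le_of_mul_le_mul_left ?_ hα
  linarith

theorem residual_geometric_decay_general {V E W : Type*} [Fintype V] [Fintype E] [Fintype W]
    (B : Matrix V E ℝ) (c : E → ℝ)
    (α : ℝ) (hα : 1 ≤ α) (R : Matrix W V ℝ)
    (hR : IsCongestionApprox B c α R)
    (T : ℕ) (b : ℕ → V → ℝ) (f : ℕ → E → ℝ)
    (hb1 : ∃ g : E → ℝ, B.mulVec g = b 1)
    (hrec : ∀ i, 1 ≤ i → i ≤ T → b (i + 1) = b i - B.mulVec (f i))
    (happrox : ∀ i, 1 ≤ i → i ≤ T →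
      linf (fun e => f i e / c e) + 2 * α * linf (R.mulVec (b (i + 1))) ≤
        (3 / 2) * opt B c (b i)) :
    (∀ i, 1 ≤ i → i ≤ T →
        linf (R.mulVec (b (i + 1))) ≤ (1 / 2) * linf (R.mulVec (b i))) ∧
      linf (R.mulVec (b (T + 1))) ≤ (2 : ℝ) ^ (-(T : ℤ)) * linf (R.mulVec (b 1)) := by
  have hcol : ∀ i, 1 ≤ i → i ≤ T + 1 → ∃ g, B *ᵥ g = b i := by
    intro i hi
    induction i, hi using Nat.le_induction with
    | base => exact fun _ => hb1
    | succ i hi ih =>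
      intro hiT
      rw [hrec i hi (by omega)]
      exact exists_mulVec_eq_sub B (ih (by omega)) (f i)
  have hhalf : ∀ i, 1 ≤ i → i ≤ T →
      linf (R *ᵥ b (i + 1)) ≤ (1 / 2) * linf (R *ᵥ b i) := by
    intro i hi hiT
    have happrox_i := happrox i hi hiT
    rw [hrec i hi hiT] at happrox_i ⊢
    exact hR.linf_mulVec_sub_le_half (by linarith) (hcol i hi (by omega)) (f i) happrox_i
  refine ⟨hhalf, ?_⟩
  have hgeom := le_geom (u := fun k => linf (R *ᵥ b (k + 1))) (by norm_num) T
    fun k hk => hhalf (k + 1) (by omega) hk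
  simpa using hgeom

/-- Geometric decay of residuals under repeated `3/2`-approximate routing:
each step halves `‖R b_i‖_∞`, hence `‖R b_{T+1}‖_∞ ≤ 2^{−T} ‖R b_1‖_∞`. -/
theorem residual_geometric_decay {V E W : Type*} [Fintype V] [Fintype E] [Fintype W]
    [Nonempty V] [Nonempty E]
    (B : Matrix V E ℝ) (c : E → ℝ) (hc : ∀ e, 0 < c e)
    (α : ℝ) (hα : 1 ≤ α) (R : Matrix W V ℝ)
    (hR : IsCongestionApprox B c α R)
    (T : ℕ) (b : ℕ → V → ℝ) (f : ℕ → E → ℝ)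
    (hb1 : ∃ g : E → ℝ, B.mulVec g = b 1)
    (hrec : ∀ i, 1 ≤ i → i ≤ T → b (i + 1) = b i - B.mulVec (f i))
    (happrox : ∀ i, 1 ≤ i → i ≤ T →
      linf (fun e => f i e / c e) + 2 * α * linf (R.mulVec (b (i + 1))) ≤
        (3 / 2) * opt B c (b i)) :
    (∀ i, 1 ≤ i → i ≤ T →
        linf (R.mulVec (b (i + 1))) ≤ (1 / 2) * linf (R.mulVec (b i))) ∧
      linf (R.mulVec (b (T + 1))) ≤ (2 : ℝ) ^ (-(T : ℤ)) * linf (R.mulVec (b 1)) :=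
  residual_geometric_decay_general B c α hα R hR T b f hb1 hrec happrox
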